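/- arXiv:1501.03622 — 2 statements merged into one kernel-verified Lean document; each statement's English description precedes it below -/
import Mathlib

section
/- For every s > d, there exists a constant C_s > 0 such that for all measurable functions u, v on ℝ^d with sup_x ⟨x⟩^s |u(x)| < ∞ and sup_x ⟨x⟩^s |v(x)| < ∞, the convolution u * v satisfies sup_x ⟨x⟩^s |(u*v)(x)| ≤ C_s (sup_x ⟨x⟩^s |u(x)|)(sup_x ⟨x⟩^s |v(x)|). In other words, the weighted space L^∞_{v_s} is a convolution algebra when s > d. -/
open MeasureTheory

noncomputable def jap {d : ℕ} (x : EuclideanSpace ℝ (Fin d)) : ℝ := Real.sqrt (1 + ‖x‖^2)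

lemma one_le_jap {d : ℕ} (x : EuclideanSpace ℝ (Fin d)) : 1 ≤ jap x := by
  rw [jap]
  nlinarith [Real.sq_sqrt (show (0:ℝ) ≤ 1 + ‖x‖^2 by positivity),
    Real.sqrt_nonneg (1 + ‖x‖^2), sq_nonneg ‖x‖]

lemma jap_pos {d : ℕ} (x : EuclideanSpace ℝ (Fin d)) : 0 < jap x :=
  lt_of_lt_of_le one_pos (one_le_jap x)

lemma jap_rpow_eq {d : ℕ} (x : EuclideanSpace ℝ (Fin d)) (s : ℝ) :
    jap x ^ s = ((1:ℝ) + ‖x‖^2) ^ (s/2) := by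
  have h0 : (0:ℝ) ≤ 1 + ‖x‖^2 := by positivity
  rw [jap, Real.sqrt_eq_rpow, ← Real.rpow_mul h0]
  congr 1
  ring

lemma jap_triangle {d : ℕ} (a b : EuclideanSpace ℝ (Fin d)) :
    jap (a + b) ≤ jap a + jap b := by
  have hA : 0 ≤ ‖a‖ := norm_nonneg a
  have hB : 0 ≤ ‖b‖ := norm_nonneg b
  have h1 : jap (a + b) ≤ Real.sqrt (1 + (‖a‖ + ‖b‖)^2) := by
    apply Real.sqrt_le_sqrt
    have := norm_add_le a b
    nlinarith [norm_nonneg (a + b)]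
  refine h1.trans ?_
  have hSA : ‖a‖ ≤ jap a := by
    calc ‖a‖ = Real.sqrt (‖a‖^2) := (Real.sqrt_sq hA).symm
      _ ≤ jap a := Real.sqrt_le_sqrt (by linarith)
  have hSB : ‖b‖ ≤ jap b := by
    calc ‖b‖ = Real.sqrt (‖b‖^2) := (Real.sqrt_sq hB).symm
      _ ≤ jap b := Real.sqrt_le_sqrt (by linarith)
  have hSA2 : jap a ^ 2 = 1 + ‖a‖^2 := by
    rw [jap]; exact Real.sq_sqrt (by positivity)
  have hSB2 : jap b ^ 2 = 1 + ‖b‖^2 := by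
    rw [jap]; exact Real.sq_sqrt (by positivity)
  have hs : 0 ≤ jap a + jap b := by linarith [jap_pos a, jap_pos b]
  calc Real.sqrt (1 + (‖a‖ + ‖b‖)^2) ≤ Real.sqrt ((jap a + jap b)^2) := by
        apply Real.sqrt_le_sqrt
        nlinarith [mul_le_mul hSA hSB hB (jap_pos a).le]
    _ = jap a + jap b := Real.sqrt_sq hs

/-- Peetre-type inequality in rpow form. -/
lemma jap_rpow_peetre {d : ℕ} (x y : EuclideanSpace ℝ (Fin d)) {s : ℝ} (hs : 0 ≤ s) :
    jap x ^ s ≤ 2 ^ s * (jap (x - y) ^ s + jap y ^ s) := by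
  have h1 : jap x ≤ jap (x - y) + jap y := by
    have := jap_triangle (x - y) y
    simpa using this
  have h2 : jap x ≤ 2 * max (jap (x - y)) (jap y) := by
    have := le_max_left (jap (x - y)) (jap y)
    have := le_max_right (jap (x - y)) (jap y)
    linarith
  have hmax : 0 ≤ max (jap (x - y)) (jap y) := le_trans (jap_pos y).le (le_max_right _ _)
  calc jap x ^ s ≤ (2 * max (jap (x - y)) (jap y)) ^ s :=
        Real.rpow_le_rpow (jap_pos x).le h2 hs
    _ = 2 ^ s * max (jap (x - y)) (jap y) ^ s := Real.mul_rpow (by norm_num) hmax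
    _ ≤ 2 ^ s * (jap (x - y) ^ s + jap y ^ s) := by
        gcongr
        rcases max_cases (jap (x - y)) (jap y) with ⟨h, _⟩ | ⟨h, _⟩ <;> rw [h]
        · nlinarith [Real.rpow_nonneg (jap_pos y).le s]
        · nlinarith [Real.rpow_nonneg (jap_pos (x - y)).le s]

/-- For `s > d`, the weighted space `L^∞_{v_s}` is a convolution algebra. -/
theorem weighted_Linfty_convolution_algebra (d : ℕ) (hd : 0 < d) (s : ℝ) (hs : (d : ℝ) < s) :
    ∃ C > 0, ∀ (u v : EuclideanSpace ℝ (Fin d) → ℂ), Measurable u → Measurable v →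
      ∀ Cu Cv : ℝ, (∀ x, jap x ^ s * ‖u x‖ ≤ Cu) → (∀ x, jap x ^ s * ‖v x‖ ≤ Cv) →
      ∀ x, jap x ^ s * ‖∫ y, u (x - y) * v y‖ ≤ C * Cu * Cv := by
  have hs0 : 0 < s := lt_of_le_of_lt (Nat.cast_nonneg d) hs
  set g : EuclideanSpace ℝ (Fin d) → ℝ := fun y => jap y ^ (-s) with hg
  have hgpos : ∀ y, 0 < g y := fun y => Real.rpow_pos_of_pos (jap_pos y) _
  have hgle1 : ∀ y, g y ≤ 1 := fun y => by
    rw [hg]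
    exact Real.rpow_le_one_of_one_le_of_nonpos (one_le_jap y) (by linarith)
  have hgInt : Integrable g := by
    have h0 : Integrable (fun y : EuclideanSpace ℝ (Fin d) => ((1:ℝ) + ‖y‖^2) ^ (-s/2)) := by
      apply integrable_rpow_neg_one_add_norm_sq
      simpa using hs
    refine h0.congr (ae_of_all _ fun y => ?_)
    exact (jap_rpow_eq y (-s)).symm
  set I := ∫ y, g y with hI
  have hI0 : 0 ≤ I := integral_nonneg fun y => (hgpos y).le
  refine ⟨max (2 ^ s * (2 * I)) 1, lt_of_lt_of_le one_pos (le_max_right _ _), ?_⟩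
  intro u v hu hv Cu Cv hCu hCv x
  have hCu0 : 0 ≤ Cu := le_trans
    (mul_nonneg (Real.rpow_nonneg (jap_pos 0).le s) (norm_nonneg _)) (hCu 0)
  have hCv0 : 0 ≤ Cv := le_trans
    (mul_nonneg (Real.rpow_nonneg (jap_pos 0).le s) (norm_nonneg _)) (hCv 0)
  have hub : ∀ z, ‖u z‖ ≤ Cu * g z := by
    intro z
    have h := hCu z
    have hp : 0 < jap z ^ s := Real.rpow_pos_of_pos (jap_pos z) _
    show ‖u z‖ ≤ Cu * jap z ^ (-s)
    rw [Real.rpow_neg (jap_pos z).le, ← div_eq_mul_inv, le_div_iff₀ hp]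
    linarith [h]
  have hvb : ∀ z, ‖v z‖ ≤ Cv * g z := by
    intro z
    have h := hCv z
    have hp : 0 < jap z ^ s := Real.rpow_pos_of_pos (jap_pos z) _
    show ‖v z‖ ≤ Cv * jap z ^ (-s)
    rw [Real.rpow_neg (jap_pos z).le, ← div_eq_mul_inv, le_div_iff₀ hp]
    linarith [h]
  set f : EuclideanSpace ℝ (Fin d) → ℂ := fun y => u (x - y) * v y with hf
  have hfm : AEStronglyMeasurable f volume :=
    ((hu.comp (measurable_const.sub measurable_id)).mul hv).aestronglyMeasurable
  have hfInt : Integrable f := by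
    refine (hgInt.const_mul (Cu * Cv)).mono' hfm (ae_of_all _ fun y => ?_)
    rw [hf]
    simp only [norm_mul]
    calc ‖u (x - y)‖ * ‖v y‖ ≤ (Cu * g (x - y)) * (Cv * g y) :=
          mul_le_mul (hub _) (hvb _) (norm_nonneg _)
            (mul_nonneg hCu0 (hgpos _).le)
      _ ≤ (Cu * 1) * (Cv * g y) :=
          mul_le_mul_of_nonneg_right (mul_le_mul_of_nonneg_left (hgle1 _) hCu0)
            (mul_nonneg hCv0 (hgpos _).le)
      _ = Cu * Cv * g y := by ring
  -- the shifted g is integrable with the same integral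
  have hgshift : Integrable (fun y => g (x - y)) := hgInt.comp_sub_left x
  have hgshiftI : (∫ y, g (x - y)) = I := integral_sub_left_eq_self g volume x
  -- main estimate
  have key : ∀ y, jap x ^ s * ‖f y‖ ≤ 2 ^ s * (Cu * Cv * g y + Cu * Cv * g (x - y)) := by
    intro y
    have hp := jap_rpow_peetre x y hs0.le
    have hnf : 0 ≤ ‖f y‖ := norm_nonneg _
    have step1 : jap x ^ s * ‖f y‖ ≤ 2 ^ s * (jap (x - y) ^ s + jap y ^ s) * ‖f y‖ :=
      mul_le_mul_of_nonneg_right hp hnf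
    refine step1.trans ?_
    rw [hf]
    simp only [norm_mul]
    have e1 : jap (x - y) ^ s * (‖u (x - y)‖ * ‖v y‖)
        = (jap (x - y) ^ s * ‖u (x - y)‖) * ‖v y‖ := by ring
    have b1 : jap (x - y) ^ s * (‖u (x - y)‖ * ‖v y‖) ≤ Cu * (Cv * g y) := by
      rw [e1]
      exact mul_le_mul (hCu _) (hvb _) (norm_nonneg _) hCu0
    have e2 : jap y ^ s * (‖u (x - y)‖ * ‖v y‖)
        = (jap y ^ s * ‖v y‖) * ‖u (x - y)‖ := by ring
    have b2 : jap y ^ s * (‖u (x - y)‖ * ‖v y‖) ≤ Cv * (Cu * g (x - y)) := by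
      rw [e2]
      exact mul_le_mul (hCv _) (hub _) (norm_nonneg _) hCv0
    have h2s : (0:ℝ) ≤ 2 ^ s := Real.rpow_nonneg (by norm_num) s
    nlinarith [mul_le_mul_of_nonneg_left b1 h2s, mul_le_mul_of_nonneg_left b2 h2s]
  calc jap x ^ s * ‖∫ y, u (x - y) * v y‖
      ≤ jap x ^ s * ∫ y, ‖f y‖ :=
        mul_le_mul_of_nonneg_left (norm_integral_le_integral_norm f)
          (Real.rpow_nonneg (jap_pos x).le s)
    _ = ∫ y, jap x ^ s * ‖f y‖ := (integral_const_mul _ _).symm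
    _ ≤ ∫ y, 2 ^ s * (Cu * Cv * g y + Cu * Cv * g (x - y)) := by
        apply integral_mono (hfInt.norm.const_mul _)
        · exact (((hgInt.const_mul (Cu * Cv)).add (hgshift.const_mul (Cu * Cv))).const_mul _)
        · exact key
    _ = 2 ^ s * (Cu * Cv * I + Cu * Cv * I) := by
        rw [integral_const_mul, integral_add (hgInt.const_mul _) (hgshift.const_mul _),
          integral_const_mul, integral_const_mul, hgshiftI]
    _ = (2 ^ s * (2 * I)) * Cu * Cv := by ring
    _ ≤ max (2 ^ s * (2 * I)) 1 * Cu * Cv := by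
        gcongr
        exact le_max_left _ _
end

section
/- In one dimension: let 0 ≤ ℓ ≤ n be integers. There exists a constant C > 0 such that for every half-line I = [a,∞) or I = (−∞,a] and every n-times continuously differentiable function u on I with u and u^{(n)} bounded on I, one has ‖u^{(ℓ)}‖_{L^∞(I)} ≤ C ‖u‖_{L^∞(I)}^{1−ℓ/n} ‖u^{(n)}‖_{L^∞(I)}^{ℓ/n}. -/
/-!
Expand `u` by Taylor's formula of order `n - 1` at `x` and evaluate at the nodes `x + i h`,
`0 ≤ i < n`, which lie in the half-line when it points to the right (reflect `u` otherwise). The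
values `(h^k / k!) u^(k)(x)` then solve a fixed invertible Vandermonde system whose right-hand
side is bounded by `‖u‖ + ‖u^(n)‖ (n h)^n`, so
`‖u^(ℓ)(x)‖ ≤ C (‖u‖ h^(-ℓ) + ‖u^(n)‖ h^(n-ℓ))` for every `h > 0`. Balancing the two terms
in `h` gives the multiplicative inequality.
-/

open Set Filter Topology
open scoped Nat

theorem Matrix.norm_le_sum_norm_inv_mul {𝕜 E ι : Type*} [NormedField 𝕜] [SeminormedAddCommGroup E]
    [NormedSpace 𝕜 E] [Fintype ι] [DecidableEq ι] {A : Matrix ι ι 𝕜} (hA : IsUnit A.det)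
    {c : ι → E} {B : ℝ} (hB : ∀ i, ‖∑ j, A i j • c j‖ ≤ B) (k : ι) :
    ‖c k‖ ≤ (∑ i, ‖A⁻¹ k i‖) * B := by
  have hc : c k = ∑ i, A⁻¹ k i • ∑ j, A i j • c j := by
    simp_rw [Finset.smul_sum, smul_smul]
    rw [Finset.sum_comm]
    simp_rw [← Finset.sum_smul, ← Matrix.mul_apply, Matrix.nonsing_inv_mul A hA,
      Matrix.one_apply, ite_smul, one_smul, zero_smul, Finset.sum_ite_eq, Finset.mem_univ, if_true]
  rw [hc, Finset.sum_mul]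
  refine (norm_sum_le _ _).trans (Finset.sum_le_sum fun i _ => ?_)
  rw [norm_smul]
  exact mul_le_mul_of_nonneg_left (hB i) (norm_nonneg _)

theorem iteratedDerivWithin_subset {𝕜 F : Type*} [NontriviallyNormedField 𝕜]
    [NormedAddCommGroup F] [NormedSpace 𝕜 F] {f : 𝕜 → F} {s t : Set 𝕜} {n : ℕ} {x : 𝕜}
    (st : s ⊆ t) (hs : UniqueDiffOn 𝕜 s) (ht : UniqueDiffOn 𝕜 t) (hf : ContDiffOn 𝕜 n f t)
    (hx : x ∈ s) : iteratedDerivWithin n f s x = iteratedDerivWithin n f t x := by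
  simp only [iteratedDerivWithin_eq_iteratedFDerivWithin,
    iteratedFDerivWithin_subset st hs ht hf hx]

section

variable {E : Type*} [NormedAddCommGroup E] [NormedSpace ℝ E]

theorem taylor_mean_remainder_bound_of_Icc_subset {f : ℝ → E} {s : Set ℝ} {x y C : ℝ} {m : ℕ}
    (hs : UniqueDiffOn ℝ s) (hf : ContDiffOn ℝ (m + 1) f s) (hxy : x ≤ y) (hsub : Icc x y ⊆ s)
    (hC : ∀ z ∈ Icc x y, ‖iteratedDerivWithin (m + 1) f s z‖ ≤ C) :
    ‖f y - taylorWithinEval f m s x y‖ ≤ C * (y - x) ^ (m + 1) / m ! := by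
  rcases hxy.eq_or_lt with rfl | hlt
  · simp
  have hI := uniqueDiffOn_Icc hlt
  have htaylor : taylorWithinEval f m (Icc x y) x y = taylorWithinEval f m s x y := by
    simp only [taylor_within_apply]
    refine Finset.sum_congr rfl fun k hk => ?_
    rw [iteratedDerivWithin_subset hsub hI hs (hf.of_le ?_) (left_mem_Icc.2 hxy)]
    exact_mod_cast (Finset.mem_range.1 hk).le
  rw [← htaylor]
  refine taylor_mean_remainder_bound hxy (hf.mono hsub) (right_mem_Icc.2 hxy) fun z hz => ?_
  rw [iteratedDerivWithin_subset hsub hI hs (by exact_mod_cast hf) hz]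
  exact hC z hz

theorem sum_vandermonde_smul_taylorCoeffWithin (u : ℝ → E) (m : ℕ) (s : Set ℝ) (x h : ℝ)
    (i : Fin (m + 1)) :
    ∑ j, Matrix.vandermonde (fun i : Fin (m + 1) => (i : ℝ)) i j •
        (h ^ (j : ℕ) • taylorCoeffWithin u j s x) =
      taylorWithinEval u m s x (x + i * h) := by
  rw [taylor_within_apply, ← Fin.sum_univ_eq_sum_range]
  refine Finset.sum_congr rfl fun j _ => ?_
  simp only [Matrix.vandermonde_apply, taylorCoeffWithin, smul_smul, add_sub_cancel_left, mul_pow]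
  ring_nf

theorem norm_pow_smul_taylorCoeffWithin {h : ℝ} (hh : 0 ≤ h) (u : ℝ → E) (k : ℕ) (s : Set ℝ)
    (x : ℝ) :
    ‖h ^ k • taylorCoeffWithin u k s x‖ = h ^ k / k ! * ‖iteratedDerivWithin k u s x‖ := by
  simp only [taylorCoeffWithin, norm_smul, norm_pow, Real.norm_of_nonneg hh, norm_inv,
    RCLike.norm_natCast]
  ring

theorem norm_taylorWithinEval_le {u : ℝ → E} {s : Set ℝ} {x y Mu Mn : ℝ} {m : ℕ}
    (hs : UniqueDiffOn ℝ s) (hu : ContDiffOn ℝ (m + 1) u s) (hxy : x ≤ y) (hsub : Icc x y ⊆ s)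
    (hMu : ‖u y‖ ≤ Mu) (hMn : ∀ z ∈ Icc x y, ‖iteratedDerivWithin (m + 1) u s z‖ ≤ Mn) :
    ‖taylorWithinEval u m s x y‖ ≤ Mu + Mn * (y - x) ^ (m + 1) := by
  have hMn0 : 0 ≤ Mn := (norm_nonneg _).trans (hMn x (left_mem_Icc.2 hxy))
  calc ‖taylorWithinEval u m s x y‖
      ≤ ‖u y‖ + ‖u y - taylorWithinEval u m s x y‖ := norm_le_insert _ _
    _ ≤ Mu + Mn * (y - x) ^ (m + 1) / m ! :=
      add_le_add hMu (taylor_mean_remainder_bound_of_Icc_subset hs hu hxy hsub hMn)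
    _ ≤ Mu + Mn * (y - x) ^ (m + 1) := by
      gcongr
      exact div_le_self (by have := sub_nonneg.2 hxy; positivity)
        (by exact_mod_cast m.factorial_pos)

theorem exists_norm_iteratedDerivWithin_le_of_Icc_subset {ℓ n : ℕ} (hℓ : ℓ < n) :
    ∃ C > 0, ∀ (s : Set ℝ) (u : ℝ → E) (Mu Mn x h : ℝ), UniqueDiffOn ℝ s →
      ContDiffOn ℝ n u s → (∀ y ∈ s, ‖u y‖ ≤ Mu) →
      (∀ y ∈ s, ‖iteratedDerivWithin n u s y‖ ≤ Mn) → 0 < h → Icc x (x + n * h) ⊆ s →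
      ‖iteratedDerivWithin ℓ u s x‖ ≤ C * (Mu / h ^ ℓ + Mn * h ^ (n - ℓ)) := by
  obtain ⟨m, rfl⟩ : ∃ m, n = m + 1 := ⟨n - 1, by omega⟩
  set V := Matrix.vandermonde fun i : Fin (m + 1) => (i : ℝ)
  have hV : IsUnit V.det :=
    (Matrix.det_vandermonde_ne_zero_iff.2 fun i j hij => Fin.ext (by exact_mod_cast hij)).isUnit
  set D := ∑ i, ‖V⁻¹ ⟨ℓ, hℓ⟩ i‖
  set K : ℝ := (m + 1) ^ (m + 1)
  refine ⟨(D + 1) * ℓ ! * K, by positivity, ?_⟩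
  intro s u Mu Mn x h hs hu hMu hMn hh hsub
  have hx : x ∈ s := hsub (left_mem_Icc.2 (by push_cast; nlinarith))
  have hMu0 : 0 ≤ Mu := (norm_nonneg _).trans (hMu x hx)
  have hMn0 : 0 ≤ Mn := (norm_nonneg _).trans (hMn x hx)
  set c : Fin (m + 1) → E := fun j => h ^ (j : ℕ) • taylorCoeffWithin u j s x
  have hnodes (i : Fin (m + 1)) : ‖∑ j, V i j • c j‖ ≤ Mu + Mn * ((m + 1) * h) ^ (m + 1) := by
    rw [sum_vandermonde_smul_taylorCoeffWithin]
    have hi : (i : ℝ) ≤ m + 1 := by exact_mod_cast i.isLt.le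
    have hxy : x ≤ x + i * h := by nlinarith [(i : ℕ).cast_nonneg (α := ℝ)]
    have hIcc : Icc x (x + i * h) ⊆ s :=
      (Icc_subset_Icc_right (by push_cast; nlinarith)).trans hsub
    refine (norm_taylorWithinEval_le hs hu hxy hIcc (hMu _ (hIcc (right_mem_Icc.2 hxy)))
      fun z hz => hMn z (hIcc hz)).trans ?_
    rw [add_sub_cancel_left]
    gcongr
  have hcoeff := Matrix.norm_le_sum_norm_inv_mul hV hnodes ⟨ℓ, hℓ⟩
  set Q := Mu / h ^ ℓ + Mn * h ^ (m + 1 - ℓ)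
  have hB : Mu + Mn * ((m + 1) * h) ^ (m + 1) ≤ h ^ ℓ * (K * Q) := by
    have hK : 1 ≤ K := one_le_pow₀ (by linarith [m.cast_nonneg (α := ℝ)])
    have hsplit : h ^ (m + 1) = h ^ ℓ * h ^ (m + 1 - ℓ) := by
      rw [← pow_add, Nat.add_sub_cancel' hℓ.le]
    have hexp : h ^ ℓ * (K * Q) = K * Mu + Mn * ((m + 1) * h) ^ (m + 1) := by
      simp only [Q, K]
      rw [mul_pow, hsplit]
      field_simp
    rw [hexp]
    nlinarith
  refine le_of_mul_le_mul_left ?_ (by positivity : 0 < h ^ ℓ / ℓ !)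
  calc h ^ ℓ / ℓ ! * ‖iteratedDerivWithin ℓ u s x‖
      ≤ D * (Mu + Mn * ((m + 1) * h) ^ (m + 1)) :=
        (norm_pow_smul_taylorCoeffWithin hh.le u ℓ s x).symm.trans_le hcoeff
    _ ≤ (D + 1) * (h ^ ℓ * (K * Q)) := by gcongr; linarith
    _ = h ^ ℓ / ℓ ! * ((D + 1) * ℓ ! * K * Q) := by field_simp

open scoped Pointwise in
theorem norm_iteratedDerivWithin_comp_neg (k : ℕ) (u : ℝ → E) (s : Set ℝ) (x : ℝ) :
    ‖iteratedDerivWithin k (fun t => u (-t)) s x‖ = ‖iteratedDerivWithin k u (-s) (-x)‖ := by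
  rw [iteratedDerivWithin_comp_neg, norm_smul, norm_pow, norm_neg, norm_one, one_pow, one_mul]

open scoped Pointwise in
theorem exists_norm_iteratedDerivWithin_halfline_le {ℓ n : ℕ} (hℓ : ℓ < n) :
    ∃ C > 0, ∀ (a : ℝ) (I : Set ℝ), (I = Ici a ∨ I = Iic a) →
      ∀ (u : ℝ → E) (Mu Mn : ℝ), ContDiffOn ℝ n u I → (∀ y ∈ I, ‖u y‖ ≤ Mu) →
        (∀ y ∈ I, ‖iteratedDerivWithin n u I y‖ ≤ Mn) → ∀ x ∈ I, ∀ h > 0,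
          ‖iteratedDerivWithin ℓ u I x‖ ≤ C * (Mu / h ^ ℓ + Mn * h ^ (n - ℓ)) := by
  obtain ⟨C, hC, hbound⟩ := exists_norm_iteratedDerivWithin_le_of_Icc_subset (E := E) hℓ
  refine ⟨C, hC, ?_⟩
  rintro a I (rfl | rfl) u Mu Mn hu hMu hMn x hx h hh
  · exact hbound _ u Mu Mn x h (uniqueDiffOn_Ici a) hu hMu hMn hh
      (Icc_subset_Ici_self.trans (Ici_subset_Ici.2 hx))
  · have hneg : -Ici (-a) = Iic a := by rw [neg_Ici, neg_neg]
    have hx' : -x ∈ Ici (-a) := mem_Ici.2 (neg_le_neg hx)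
    have := hbound (Ici (-a)) (fun t => u (-t)) Mu Mn (-x) h (uniqueDiffOn_Ici _)
      (hu.comp contDiff_neg.contDiffOn fun t ht => mem_Iic.2 (neg_le.1 ht))
      (fun y hy => hMu _ (mem_Iic.2 (neg_le.1 hy)))
      (fun y hy => by
        rw [norm_iteratedDerivWithin_comp_neg, hneg]; exact hMn _ (mem_Iic.2 (neg_le.1 hy)))
      hh (Icc_subset_Ici_self.trans (Ici_subset_Ici.2 hx'))
    rwa [norm_iteratedDerivWithin_comp_neg, hneg, neg_neg] at this

end

theorem exists_mul_rpow_neg_eq_mul_rpow_sub {A B p r : ℝ} (hA : 0 < A) (hB : 0 < B) (hr : 0 < r) :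
    ∃ h > 0, A * h ^ (-p) = A ^ (1 - p / r) * B ^ (p / r) ∧
      B * h ^ (r - p) = A ^ (1 - p / r) * B ^ (p / r) := by
  have hpow (t : ℝ) : ((A / B) ^ (1 / r)) ^ t = A ^ (t / r) / B ^ (t / r) := by
    rw [← Real.rpow_mul (div_pos hA hB).le, one_div_mul_eq_div, Real.div_rpow hA.le hB.le]
  have hsub (X : ℝ) (hX : 0 < X) : X ^ (1 - p / r) = X / X ^ (p / r) := by
    rw [Real.rpow_sub hX, Real.rpow_one]
  refine ⟨(A / B) ^ (1 / r), by positivity, ?_, ?_⟩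
  · rw [hpow, neg_div, Real.rpow_neg hA.le, Real.rpow_neg hB.le, hsub A hA]
    field_simp
  · rw [hpow, sub_div, div_self hr.ne', hsub A hA, hsub B hB]
    field_simp

theorem le_two_mul_rpow_mul_rpow_of_forall_le {v C A B p r : ℝ} (hp : 0 ≤ p) (hpr : p ≤ r)
    (hr : 0 < r) (hC : 0 ≤ C) (hA : 0 ≤ A) (hB : 0 ≤ B)
    (hv : ∀ h > 0, v ≤ C * (A * h ^ (-p) + B * h ^ (r - p))) :
    v ≤ 2 * C * A ^ (1 - p / r) * B ^ (p / r) := by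
  set F : ℝ → ℝ := fun ε => 2 * C * (A + ε) ^ (1 - p / r) * (B + ε) ^ (p / r)
  have hF : Continuous F := by
    have hα : 0 ≤ p / r := div_nonneg hp hr.le
    have hα' : 0 ≤ 1 - p / r := sub_nonneg.2 ((div_le_one hr).2 hpr)
    exact (continuous_const.mul ((continuous_const.add continuous_id).rpow_const
      fun _ => Or.inr hα')).mul ((continuous_const.add continuous_id).rpow_const fun _ => Or.inr hα)
  have hlim : Tendsto F (𝓝[>] 0) (𝓝 (F 0)) := hF.continuousWithinAt.tendsto
  simp only [F, add_zero] at hlim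
  -- shifting `A` and `B` by `ε > 0` makes the balancing `h` exist even when `A` or `B` vanishes
  refine ge_of_tendsto hlim (eventually_nhdsWithin_of_forall fun ε (hε : 0 < ε) => ?_)
  obtain ⟨h, hh, hAh, hBh⟩ :=
    exists_mul_rpow_neg_eq_mul_rpow_sub (add_pos_of_nonneg_of_pos hA hε)
      (add_pos_of_nonneg_of_pos hB hε) (p := p) hr
  calc v ≤ C * (A * h ^ (-p) + B * h ^ (r - p)) := hv h hh
    _ ≤ C * ((A + ε) * h ^ (-p) + (B + ε) * h ^ (r - p)) := by gcongr <;> linarith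
    _ = F ε := by rw [hAh, hBh]; ring

/-- Landau–Kolmogorov interpolation inequality on half-lines: for `0 ≤ ℓ ≤ n` there is a
constant `C > 0` such that for every half-line `I` and every `C^n` function `u` on `I`,
`‖u^{(ℓ)}‖_{L^∞(I)} ≤ C ‖u‖_{L^∞(I)}^{1-ℓ/n} ‖u^{(n)}‖_{L^∞(I)}^{ℓ/n}`. -/
theorem landau_kolmogorov_halfline (ℓ n : ℕ) (hln : ℓ ≤ n) :
    ∃ C > 0, ∀ (a : ℝ) (I : Set ℝ), (I = Set.Ici a ∨ I = Set.Iic a) →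
      ∀ (u : ℝ → ℂ) (Mu Mn : ℝ), ContDiffOn ℝ n u I →
        (∀ x ∈ I, ‖u x‖ ≤ Mu) →
        (∀ x ∈ I, ‖iteratedDerivWithin n u I x‖ ≤ Mn) →
        ∀ x ∈ I, ‖iteratedDerivWithin ℓ u I x‖ ≤
          C * Mu ^ (1 - (ℓ : ℝ) / n) * Mn ^ ((ℓ : ℝ) / n) := by
  rcases Nat.eq_zero_or_pos n with rfl | hn
  · obtain rfl := Nat.le_zero.1 hln
    refine ⟨1, one_pos, fun a I _ u Mu Mn _ hMu _ x hx => ?_⟩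
    simpa using hMu x hx
  rcases hln.eq_or_lt with rfl | hℓn
  · refine ⟨1, one_pos, fun a I _ u Mu Mn _ _ hMn x hx => ?_⟩
    have hℓ : (ℓ : ℝ) ≠ 0 := Nat.cast_ne_zero.2 hn.ne'
    simpa [div_self hℓ] using hMn x hx
  obtain ⟨C, hC, hbound⟩ := exists_norm_iteratedDerivWithin_halfline_le (E := ℂ) hℓn
  refine ⟨2 * C, by positivity, fun a I hI u Mu Mn hu hMu hMn x hx => ?_⟩
  refine le_two_mul_rpow_mul_rpow_of_forall_le ℓ.cast_nonneg (Nat.cast_le.2 hln)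
    (Nat.cast_pos.2 hn) hC.le ((norm_nonneg _).trans (hMu x hx))
    ((norm_nonneg _).trans (hMn x hx)) fun h hh => ?_
  convert hbound a I hI u Mu Mn hu hMu hMn x hx h hh using 4
  · rw [Real.rpow_neg hh.le, Real.rpow_natCast, div_eq_mul_inv]
  · rw [← Nat.cast_sub hln, Real.rpow_natCast]
end
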